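/- With the notation of the attitude error dynamics, ė_R = C(Rc^T R) e_Ω, where C(Q) = (1/2)(tr(Q^T) I - Q^T) for Q = Rc^T R, i.e., ė_R = (1/2)(tr(R^T Rc) I - R^T Rc) e_Ω. -/

import Mathlib

open Matrix
open scoped Matrix

attribute [local instance] Matrix.normedAddCommGroup Matrix.normedSpace

/-- The hat map sending `x ∈ ℝ³` to the skew-symmetric matrix `x̂` with `x̂ y = x × y`. -/
def hat (x : Fin 3 → ℝ) : Matrix (Fin 3) (Fin 3) ℝ :=
  !![0, -x 2, x 1; x 2, 0, -x 0; -x 1, x 0, 0]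

/-- The vee map, inverse of the hat map. -/
def vee (M : Matrix (Fin 3) (Fin 3) ℝ) : Fin 3 → ℝ := ![M 2 1, M 0 2, M 1 0]

/-!
With `Q = Rcᵀ R`, the error `e_R` is `½ (Q - Qᵀ)^∨`. For `Q ∈ SO(3)` one has
`Qᵀ x̂ Q = (Qᵀ x)^`, so `Q̇ = Q Ω̂ - Ω̂c Q = Q (Ω - Qᵀ Ωc)^ = Q ê_Ω`. Differentiating `e_R`
then gives `½ (Q ê_Ω - (Q ê_Ω)ᵀ)^∨`, and `(A x̂ - (A x̂)ᵀ)^∨ = (tr A · I - Aᵀ) x` holds for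
every `3 × 3` matrix `A`.
-/

section MatrixCalculus

variable {𝕜 : Type*} [NontriviallyNormedField 𝕜] {l m n : Type*} {t : 𝕜}

theorem hasDerivAt_matrix_iff [Fintype n] {A : 𝕜 → Matrix m n 𝕜} {A' : Matrix m n 𝕜} :
    HasDerivAt A A' t ↔ ∀ i j, HasDerivAt (fun s => A s i j) (A' i j) t := by
  refine ⟨fun h i j => hasDerivAt_pi.mp (hasDerivAt_pi.mp h i) j, fun h => ?_⟩
  exact hasDerivAt_pi.mpr fun i => hasDerivAt_pi.mpr (h i)

theorem HasDerivAt.matrix_transpose [Fintype m] [Fintype n] {A : 𝕜 → Matrix m n 𝕜}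
    {A' : Matrix m n 𝕜} (hA : HasDerivAt A A' t) : HasDerivAt (fun s => (A s)ᵀ) A'ᵀ t :=
  hasDerivAt_matrix_iff.mpr fun i j => hasDerivAt_matrix_iff.mp hA j i

theorem HasDerivAt.matrix_mul [Fintype l] [Fintype m] [Fintype n] {A : 𝕜 → Matrix l m 𝕜}
    {B : 𝕜 → Matrix m n 𝕜} {A' : Matrix l m 𝕜} {B' : Matrix m n 𝕜} (hA : HasDerivAt A A' t)
    (hB : HasDerivAt B B' t) :
    HasDerivAt (fun s => A s * B s) (A' * B t + A t * B') t := by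
  rw [hasDerivAt_matrix_iff] at hA hB ⊢
  intro i j
  simpa only [mul_apply, Matrix.add_apply, ← Finset.sum_add_distrib] using
    HasDerivAt.fun_sum fun k _ => (hA i k).fun_mul (hB k j)

end MatrixCalculus

theorem HasDerivAt.vee {A : ℝ → Matrix (Fin 3) (Fin 3) ℝ} {A' : Matrix (Fin 3) (Fin 3) ℝ}
    {t : ℝ} (hA : HasDerivAt A A' t) : HasDerivAt (fun s => vee (A s)) (vee A') t := by
  rw [hasDerivAt_matrix_iff] at hA
  refine hasDerivAt_pi.mpr fun i => ?_
  fin_cases i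
  exacts [hA 2 1, hA 0 2, hA 1 0]

theorem hat_sub (x y : Fin 3 → ℝ) : hat (x - y) = hat x - hat y := by
  ext i j; fin_cases i <;> fin_cases j <;> simp [hat, sub_eq_add_neg, add_comm]

theorem hat_transpose (x : Fin 3 → ℝ) : (hat x)ᵀ = -hat x := by
  ext i j; fin_cases i <;> fin_cases j <;> simp [hat]

/-- For invertible `M` this is `M u × M v = det M • M⁻ᵀ (u × v)`, free of inverses. -/
theorem transpose_mul_hat_mul (M : Matrix (Fin 3) (Fin 3) ℝ) (x : Fin 3 → ℝ) :
    Mᵀ * hat x * M = hat (M.adjugate *ᵥ x) := by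
  ext i j
  fin_cases i <;> fin_cases j <;>
    simp [hat, adjugate_fin_three, mul_apply, mulVec, dotProduct, Fin.sum_univ_three] <;> ring

theorem vee_mul_hat_sub_transpose (A : Matrix (Fin 3) (Fin 3) ℝ) (x : Fin 3 → ℝ) :
    vee (A * hat x - (A * hat x)ᵀ) =
      (A.trace • (1 : Matrix (Fin 3) (Fin 3) ℝ) - Aᵀ) *ᵥ x := by
  funext i
  fin_cases i <;>
    simp [vee, hat, mul_apply, mulVec, dotProduct, Fin.sum_univ_three, trace, one_apply] <;> ring

theorem adjugate_eq_transpose_of_orthogonal {α n : Type*} [CommRing α] [Fintype n]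
    [DecidableEq n] {Q : Matrix n n α} (hQ : Qᵀ * Q = 1) (hdet : Q.det = 1) :
    Q.adjugate = Qᵀ := by
  calc Q.adjugate = Q.adjugate * (Q * Qᵀ) := by rw [mul_eq_one_comm.mp hQ, mul_one]
    _ = Qᵀ := by rw [← mul_assoc, adjugate_mul, hdet, one_smul, one_mul]

theorem hat_mul_eq_mul_hat_transpose_mulVec {Q : Matrix (Fin 3) (Fin 3) ℝ} (hQ : Qᵀ * Q = 1)
    (hdet : Q.det = 1) (x : Fin 3 → ℝ) : hat x * Q = Q * hat (Qᵀ *ᵥ x) := by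
  rw [← adjugate_eq_transpose_of_orthogonal hQ hdet, ← transpose_mul_hat_mul, ← mul_assoc,
    ← mul_assoc, mul_eq_one_comm.mp hQ, one_mul]

theorem HasDerivAt.transpose_mul_of_special_orthogonal {R Rc : ℝ → Matrix (Fin 3) (Fin 3) ℝ}
    {ω ωc : Fin 3 → ℝ} {t : ℝ} (hRt : (R t)ᵀ * R t = 1 ∧ (R t).det = 1)
    (hRct : (Rc t)ᵀ * Rc t = 1 ∧ (Rc t).det = 1)
    (hR : HasDerivAt R (R t * hat ω) t) (hRc : HasDerivAt Rc (Rc t * hat ωc) t) :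
    HasDerivAt (fun s => (Rc s)ᵀ * R s)
      ((Rc t)ᵀ * R t * hat (ω - ((R t)ᵀ * Rc t) *ᵥ ωc)) t := by
  set Q := (Rc t)ᵀ * R t
  have hQ : Qᵀ * Q = 1 := by
    rw [transpose_mul, transpose_transpose, mul_assoc, ← mul_assoc (Rc t),
      mul_eq_one_comm.mp hRct.1, one_mul, hRt.1]
  have hdet : Q.det = 1 := by simp [Q, hRt.2, hRct.2]
  convert hRc.matrix_transpose.matrix_mul hR using 1
  rw [show (R t)ᵀ * Rc t = Qᵀ by simp [Q], hat_sub, mul_sub,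
    ← hat_mul_eq_mul_hat_transpose_mulVec hQ hdet]
  simp only [Q, transpose_mul, hat_transpose, neg_mul, mul_assoc]
  abel

/-- Attitude error dynamics: `ė_R = C(RcᵀR) e_Ω` with
`C(Q) = (1/2)(tr(Qᵀ) I - Qᵀ)`, i.e. `ė_R = (1/2)(tr(RᵀRc) I - RᵀRc) e_Ω`. -/
theorem stmt5 (R Rc : ℝ → Matrix (Fin 3) (Fin 3) ℝ) (Ω Ωc : ℝ → Fin 3 → ℝ) (t : ℝ)
    (hSO : ∀ s, (R s)ᵀ * R s = 1 ∧ (R s).det = 1)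
    (hSOc : ∀ s, (Rc s)ᵀ * Rc s = 1 ∧ (Rc s).det = 1)
    (hR : ∀ s, HasDerivAt R (R s * hat (Ω s)) s)
    (hRc : ∀ s, HasDerivAt Rc (Rc s * hat (Ωc s)) s) :
    let eΩ : Fin 3 → ℝ := Ω t - ((R t)ᵀ * Rc t).mulVec (Ωc t)
    let C : Matrix (Fin 3) (Fin 3) ℝ :=
      (1 / 2 : ℝ) • (((R t)ᵀ * Rc t).trace • (1 : Matrix (Fin 3) (Fin 3) ℝ) - (R t)ᵀ * Rc t)
    HasDerivAt (fun s => (1 / 2 : ℝ) • vee ((Rc s)ᵀ * R s - (R s)ᵀ * Rc s))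
      (C.mulVec eΩ) t := by
  intro eΩ C
  have hQ := (hR t).transpose_mul_of_special_orthogonal (hSO t) (hSOc t) (hRc t)
  have heR := ((hQ.fun_sub hQ.matrix_transpose).vee).fun_const_smul (1 / 2 : ℝ)
  rw [vee_mul_hat_sub_transpose, ← trace_transpose] at heR
  simp only [transpose_mul, transpose_transpose] at heR
  simpa only [C, smul_mulVec] using heR
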